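/- Let D_1 be the weighted oriented graph with vertices x_1, x_2, x_3, directed edges (x_1,x_2) and (x_2,x_3), and weights satisfying w(x_1) = 1, w(x_2) > 1, w(x_3) > 1, so that I(D_1) = (x_1 x_2^{w(x_2)}, x_2 x_3^{w(x_3)}). Then reg(I(D_1)) = w(x_1) + w(x_2) + w(x_3) - 1 > d_1 + 1, where d_1 = max{w(x_i) : i = 1,2,3}. -/

import Mathlib

open MvPolynomial Module

noncomputable section

/-- The polynomial ring `K[x_1, ..., x_n]`. -/
abbrev PolyR (K : Type) [Field K] (n : ℕ) : Type := MvPolynomial (Fin n) K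

variable (K : Type) [Field K] (n : ℕ)

/-- The Koszul differential on `K(x_1,...,x_n) ⊗ R`, where homological degree `i`
elements are encoded as functions on `Finset (Fin n)` supported on sets of card `i`. -/
def kDiff : (Finset (Fin n) → PolyR K n) →ₗ[K] (Finset (Fin n) → PolyR K n) where
  toFun f T := ∑ k ∈ Tᶜ,
      ((-1 : ℤ) ^ (((insert k T).filter (fun j => j < k)).card)) • (X k * f (insert k T))
  map_add' f g := by
    funext T
    simp [mul_add, smul_add, Finset.sum_add_distrib]
  map_smul' c f := by
    funext T
    simp [Finset.smul_sum, mul_smul_comm, smul_comm c]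

/-- The internal-degree-`j`, homological-degree-`i` component of the Koszul complex
of the ideal `I`: functions supported on subsets of cardinality `i`, whose values lie
in `I` and are homogeneous of degree `j - i`. -/
def kosC (I : Ideal (PolyR K n)) (i j : ℕ) : Submodule K (Finset (Fin n) → PolyR K n) :=
  if i ≤ j then
    ⨅ S : Finset (Fin n),
      Submodule.comap (LinearMap.proj S)
        (if S.card = i then
            (Submodule.restrictScalars K I ⊓ homogeneousSubmodule (Fin n) K (j - i))
          else ⊥)
  else ⊥

/-- The graded Betti number `β_{i,j}(I) = dim_K Tor_i(I, K)_j`, computed as the dimension of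
the `(i,j)`-th graded piece of the homology of the Koszul complex `K(x_1,...,x_n) ⊗ I`. -/
def bettiNum (I : Ideal (PolyR K n)) (i j : ℕ) : ℕ :=
  finrank K ↥(kosC K n I i j ⊓ LinearMap.ker (kDiff K n))
    - finrank K ↥(Submodule.map (kDiff K n) (kosC K n I (i + 1) j)
        ⊓ (kosC K n I i j ⊓ LinearMap.ker (kDiff K n)))

/-- The Castelnuovo–Mumford regularity of a homogeneous ideal `I ⊆ K[x_1,...,x_n]`:
`reg I = max { j - i | β_{i,j}(I) ≠ 0 }`. -/
def CMreg (I : Ideal (PolyR K n)) : ℕ :=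
  sSup {d : ℕ | ∃ i j : ℕ, bettiNum K n I i j ≠ 0 ∧ d = j - i}

/-- `I_⟨d⟩`: the ideal generated by the degree-`d` homogeneous component of `I`. -/
def idealComponent (I : Ideal (PolyR K n)) (d : ℕ) : Ideal (PolyR K n) :=
  Ideal.span ((I : Set (PolyR K n)) ∩ {f | f.IsHomogeneous d})

/-- An ideal is componentwise linear if for every `d ≥ 0` the ideal `I_⟨d⟩` is zero or
has a `d`-linear resolution (equivalently, `reg (I_⟨d⟩) = d`). -/
def ComponentwiseLinear (I : Ideal (PolyR K n)) : Prop :=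
  ∀ d : ℕ, idealComponent K n I d = ⊥ ∨ CMreg K n (idealComponent K n I d) = d

/-- A monomial ideal is an ideal generated by monomials. -/
def IsMonomialIdeal (I : Ideal (PolyR K n)) : Prop :=
  ∃ A : Set (Fin n →₀ ℕ), I = Ideal.span ((fun a => monomial a (1 : K)) '' A)

/-- The set `G(I)` of (exponent vectors of) the minimal monomial generators of `I`:
monomials in `I` which are not divisible by any other monomial of `I`. -/
def minMonomialGens (I : Ideal (PolyR K n)) : Set (Fin n →₀ ℕ) :=
  {a | (monomial a (1 : K)) ∈ I ∧
    ∀ b : Fin n →₀ ℕ, b ≤ a → b ≠ a → (monomial b (1 : K)) ∉ I}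

/-- Vertex splittable monomial ideals (Moradi–Khosh-Ahang):
`I = (v)`, `I = 0`, `I = R`, or `I = x I₁ + I₂` where `I₁, I₂` are vertex splittable ideals in
`K[X ∖ {x}]`, `I₂ ⊆ I₁`, and `G(I)` is the disjoint union of `G(xI₁)` and `G(I₂)`. -/
inductive VertexSplittable : Ideal (PolyR K n) → Prop
  | principal (a : Fin n →₀ ℕ) : VertexSplittable (Ideal.span {(monomial a (1 : K) : PolyR K n)})
  | bot : VertexSplittable ⊥
  | top : VertexSplittable ⊤
  | split (x : Fin n) (I₁ I₂ : Ideal (PolyR K n)) :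
      VertexSplittable I₁ → VertexSplittable I₂ →
      (∀ a ∈ minMonomialGens K n I₁, a x = 0) →
      (∀ a ∈ minMonomialGens K n I₂, a x = 0) →
      I₂ ≤ I₁ →
      minMonomialGens K n (Ideal.span {(X x : PolyR K n)} * I₁ + I₂) =
        ((fun a => a + Finsupp.single x 1) '' minMonomialGens K n I₁) ∪
          minMonomialGens K n I₂ →
      Disjoint ((fun a => a + Finsupp.single x 1) '' minMonomialGens K n I₁)
        (minMonomialGens K n I₂) →
      VertexSplittable (Ideal.span {(X x : PolyR K n)} * I₁ + I₂)

/-- A monomial ideal has linear quotients if its minimal monomial generators can be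
ordered `u_1, ..., u_m` so that each colon ideal `((u_1,...,u_{i-1}) : u_i)` is generated by
a subset of the variables. -/
def HasLinearQuotients (I : Ideal (PolyR K n)) : Prop :=
  ∃ (m : ℕ) (u : Fin m → (Fin n →₀ ℕ)),
    Function.Injective u ∧
    minMonomialGens K n I = Set.range u ∧
    ∀ i : Fin m, 0 < (i : ℕ) →
      ∃ S : Set (Fin n),
        Submodule.colon
            (Ideal.span ((fun j : Fin m => (monomial (u j) (1 : K) : PolyR K n)) ''
              {j : Fin m | (j : ℕ) < (i : ℕ)}))
            (Ideal.span {(monomial (u i) (1 : K) : PolyR K n)}) =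
          Ideal.span ((fun v => (X v : PolyR K n)) '' S)

/-- A weighted oriented graph on the vertex set `{x_1, ..., x_n}`: a set of directed edges
(ordered pairs of distinct vertices) together with a weight function `w : V → ℤ_{≥1}`. -/
structure WOGraph (n : ℕ) where
  E : Set (Fin n × Fin n)
  w : Fin n → ℕ
  loopless : ∀ v, (v, v) ∉ E
  one_le_w : ∀ v, 1 ≤ w v

/-- The edge ideal `I(D) = (x y^{w(y)} : (x,y) ∈ E(D))` of a weighted oriented graph. -/
def edgeIdeal (D : WOGraph n) : Ideal (PolyR K n) :=
  Ideal.span {m : PolyR K n | ∃ e ∈ D.E, m = X e.1 * X e.2 ^ D.w e.2}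

/-- The underlying simple graph of a weighted oriented graph. -/
def underlying (D : WOGraph n) : SimpleGraph (Fin n) where
  Adj x y := x ≠ y ∧ ((x, y) ∈ D.E ∨ (y, x) ∈ D.E)
  symm := ⟨fun x y h => ⟨h.1.symm, h.2.symm⟩⟩
  loopless := ⟨fun x h => h.1 rfl⟩

/-- The simple graph `H(I(D)_⟨2⟩)`, whose edges are the pairs `{x,y}` with `xy ∈ I(D)`,
so that `I(H) = I(D)_⟨2⟩`. -/
def Hgraph (D : WOGraph n) : SimpleGraph (Fin n) where
  Adj x y := x ≠ y ∧ (X x * X y : PolyR K n) ∈ edgeIdeal K n D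
  symm := ⟨fun x y h => ⟨h.1.symm, by rw [mul_comm]; exact h.2⟩⟩
  loopless := ⟨fun x h => h.1 rfl⟩

/-- `f : Fin k → V` is an induced cycle of length `k` in `G`: `f` is injective and the
adjacencies among its image are exactly the consecutive (cyclic) ones. -/
def IsInducedCycle {V : Type} (G : SimpleGraph V) (k : ℕ) (f : Fin k → V) : Prop :=
  Function.Injective f ∧
    ∀ a b : Fin k, G.Adj (f a) (f b) ↔
      (((a : ℕ) + 1) % k = (b : ℕ) ∨ ((b : ℕ) + 1) % k = (a : ℕ))

/-- A simple graph is chordal if it has no induced cycle of length `≥ 4`. -/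
def Chordal {V : Type} (G : SimpleGraph V) : Prop :=
  ∀ k : ℕ, 4 ≤ k → ∀ f : Fin k → V, ¬ IsInducedCycle G k f

/-- A vertex cover of `G`: a set of vertices meeting every edge. -/
def IsVertexCover {V : Type} (G : SimpleGraph V) (C : Set V) : Prop :=
  ∀ ⦃x y : V⦄, G.Adj x y → x ∈ C ∨ y ∈ C

/-- A minimal vertex cover: a vertex cover minimal with respect to inclusion. -/
def IsMinimalVertexCover {V : Type} (G : SimpleGraph V) (C : Set V) : Prop :=
  IsVertexCover G C ∧ ∀ C' ⊆ C, IsVertexCover G C' → C' = C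

end

/-!
Koszul homology of a monomial ideal `I` is multigraded. Reading off the coefficient of `x^α` in
`x_T · f_T` (`koszulStrand`) identifies the `α`-strand of `K(x₁, …, xₙ) ⊗ I` with the augmented
simplicial chain complex of the upper Koszul complex `Δ_α = {T | x^α ∈ x_T · I}` (`IsUpperFace`).
Where `Δ_α` is a cone with apex `v`, the cone homotopy makes the strand exact.

For `I = (x₀x₁ᵃ, x₁x₂ᵇ)` with `a, b ≥ 1`, `Δ_α` is a cone whenever `α` exceeds the lcm
`L = x₀x₁ᵃx₂ᵇ` in some coordinate, which happens in every degree `≥ a + b + 2`. In degree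
`a + b + 1` no monomial of `I` is a minimal generator, so homological degree `0` is exact there
too. Hence `reg I ≤ a + b`. Conversely, the syzygy `x₁ᵃx₂ᵇ e₀ - x₀x₁ᵃx₂ᵇ⁻¹ e₂` of degree
`a + b + 1` is not a boundary, since no edge of `Δ_L` contains the vertex `2`; so
`β₁,ₐ₊ᵦ₊₁(I) ≠ 0` and `reg I = a + b`.
-/

open Finsupp

noncomputable section

variable {K : Type} [Field K] {n : ℕ}

def sqfreeExp (T : Finset (Fin n)) : Fin n →₀ ℕ := ∑ k ∈ T, Finsupp.single k 1

lemma sqfreeExp_apply (T : Finset (Fin n)) (k : Fin n) :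
    sqfreeExp T k = if k ∈ T then 1 else 0 := by
  simp [sqfreeExp, Finsupp.finsetSum_apply, Finsupp.single_apply]

lemma degree_sqfreeExp (T : Finset (Fin n)) : (sqfreeExp T).degree = T.card := by
  simp [sqfreeExp, map_sum]

lemma prod_X_eq_monomial (T : Finset (Fin n)) :
    (∏ k ∈ T, X k : PolyR K n) = monomial (sqfreeExp T) 1 := by
  rw [sqfreeExp, monomial_sum_one]; rfl

def koszulSign (k : Fin n) (T : Finset (Fin n)) : ℤ :=
  (-1) ^ ((insert k T).filter (· < k)).card

lemma kDiff_apply (f : Finset (Fin n) → PolyR K n) (T : Finset (Fin n)) :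
    kDiff K n f T = ∑ k ∈ Tᶜ, koszulSign k T • (X k * f (insert k T)) := rfl

lemma koszulSign_eq (k : Fin n) (T : Finset (Fin n)) :
    koszulSign k T = (-1) ^ (T.filter (· < k)).card := by
  simp [koszulSign, Finset.filter_insert]

lemma koszulSign_mul_self (k : Fin n) (T : Finset (Fin n)) :
    koszulSign k T * koszulSign k T = 1 := by
  rw [koszulSign, ← mul_pow, neg_one_mul, neg_neg, one_pow]

lemma koszulSign_insert_mul_koszulSign_insert {k v : Fin n} {T : Finset (Fin n)} (hkv : k ≠ v)
    (hk : k ∉ T) (hv : v ∉ T) :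
    koszulSign k (insert v T) * koszulSign v (insert k T) = -(koszulSign v T * koszulSign k T) := by
  simp only [koszulSign_eq, Finset.filter_insert]
  rcases hkv.lt_or_gt with h | h
  · rw [if_neg h.not_gt, if_pos h, Finset.card_insert_of_notMem (by simp [hk]), pow_succ]
    ring
  · rw [if_pos h, if_neg h.not_gt, Finset.card_insert_of_notMem (by simp [hv]), pow_succ]
    ring

section Boundary

variable {M : Type*} [AddCommGroup M]

def koszulBoundary (c : Finset (Fin n) → M) : Finset (Fin n) → M :=
  fun T => ∑ k ∈ Tᶜ, koszulSign k T • c (insert k T)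

def coneHomotopy (v : Fin n) (c : Finset (Fin n) → M) : Finset (Fin n) → M :=
  fun U => if v ∈ U then koszulSign v (U.erase v) • c (U.erase v) else 0

@[simp]
lemma koszulBoundary_zero : koszulBoundary (0 : Finset (Fin n) → M) = 0 := by
  funext T
  simp [koszulBoundary]

@[simp]
lemma coneHomotopy_zero (v : Fin n) : coneHomotopy v (0 : Finset (Fin n) → M) = 0 := by
  funext T
  simp [coneHomotopy]

lemma koszulSign_smul_koszulSign_smul (k : Fin n) (T : Finset (Fin n)) (m : M) :
    koszulSign k T • koszulSign k T • m = m := by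
  rw [smul_smul, koszulSign_mul_self, one_smul]

theorem koszulBoundary_coneHomotopy_add (v : Fin n) (c : Finset (Fin n) → M) :
    koszulBoundary (coneHomotopy v c) + coneHomotopy v (koszulBoundary c) = c := by
  funext T
  simp only [Pi.add_apply, koszulBoundary, coneHomotopy]
  by_cases hvT : v ∈ T
  · obtain ⟨S, hvS, rfl⟩ : ∃ S, v ∉ S ∧ T = insert v S :=
      ⟨T.erase v, Finset.notMem_erase v T, (Finset.insert_erase hvT).symm⟩
    have hcompl : Sᶜ = insert v (insert v S)ᶜ := by
      ext k; by_cases hk : k = v <;> simp_all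
    have hterm : ∀ k ∈ (insert v S)ᶜ, koszulSign k (insert v S) •
        (if v ∈ insert k (insert v S) then
          koszulSign v ((insert k (insert v S)).erase v) • c ((insert k (insert v S)).erase v)
        else 0) = koszulSign k (insert v S) • koszulSign v (insert k S) • c (insert k S) := by
      intro k hk
      have hkv : k ≠ v := by rintro rfl; simp at hk
      rw [if_pos (by simp), Finset.erase_insert_of_ne hkv, Finset.erase_insert hvS]
    rw [if_pos hvT, Finset.erase_insert hvS, hcompl, Finset.sum_insert (by simp),
      Finset.sum_congr rfl hterm, smul_add, koszulSign_smul_koszulSign_smul, Finset.smul_sum,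
      add_left_comm, ← Finset.sum_add_distrib, Finset.sum_eq_zero, add_zero]
    intro k hk
    have hkv : k ≠ v := by rintro rfl; simp at hk
    have hkS : k ∉ S := by simp_all
    rw [smul_smul, smul_smul, ← add_smul, koszulSign_insert_mul_koszulSign_insert hkv hkS hvS,
      neg_add_cancel, zero_smul]
  · rw [if_neg hvT, add_zero, Finset.sum_eq_single v]
    · rw [if_pos (Finset.mem_insert_self v T), Finset.erase_insert hvT,
        koszulSign_smul_koszulSign_smul]
    · intro k _ hkv
      rw [if_neg (by simp [hvT, Ne.symm hkv]), smul_zero]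
    · intro hv
      exact absurd (Finset.mem_compl.mpr hvT) hv

end Boundary

def koszulStrand (f : Finset (Fin n) → PolyR K n) (α : Fin n →₀ ℕ) : Finset (Fin n) → K :=
  fun T => coeff α ((∏ k ∈ T, X k) * f T)

@[simp]
lemma koszulStrand_zero (α : Fin n →₀ ℕ) : koszulStrand (0 : Finset (Fin n) → PolyR K n) α = 0 := by
  funext T
  simp [koszulStrand]

lemma koszulStrand_add_sqfreeExp (f : Finset (Fin n) → PolyR K n) (γ : Fin n →₀ ℕ)
    (T : Finset (Fin n)) : koszulStrand f (γ + sqfreeExp T) T = coeff γ (f T) := by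
  rw [koszulStrand, prod_X_eq_monomial, add_comm, coeff_monomial_mul, one_mul]

lemma koszulStrand_apply (f : Finset (Fin n) → PolyR K n) (α : Fin n →₀ ℕ)
    (T : Finset (Fin n)) : koszulStrand f α T =
      if sqfreeExp T ≤ α then coeff (α - sqfreeExp T) (f T) else 0 := by
  rw [koszulStrand, prod_X_eq_monomial, coeff_monomial_mul', one_mul]

lemma koszulStrand_kDiff (f : Finset (Fin n) → PolyR K n) (α : Fin n →₀ ℕ) :
    koszulStrand (kDiff K n f) α = koszulBoundary (koszulStrand f α) := by
  funext T
  simp only [koszulStrand, koszulBoundary, kDiff_apply, Finset.mul_sum, coeff_sum, mul_smul_comm]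
  refine Finset.sum_congr rfl fun k hk => ?_
  rw [coeff_smul, Finset.prod_insert (Finset.mem_compl.mp hk), mul_left_comm, mul_assoc]

lemma eq_of_koszulStrand_eq {f g : Finset (Fin n) → PolyR K n}
    (h : ∀ α, koszulStrand f α = koszulStrand g α) : f = g := by
  funext T
  ext γ
  simpa only [koszulStrand_add_sqfreeExp] using congrFun (h (γ + sqfreeExp T)) T

lemma exists_koszulStrand_eq (s : (Fin n →₀ ℕ) → Finset (Fin n) → K)
    (A : Finset (Fin n →₀ ℕ)) (hA : ∀ α ∉ A, s α = 0)
    (hs : ∀ α U, s α U ≠ 0 → sqfreeExp U ≤ α) :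
    ∃ g : Finset (Fin n) → PolyR K n, ∀ α, koszulStrand g α = s α := by
  refine ⟨fun U => ∑ β ∈ A, monomial (β - sqfreeExp U) (s β U), fun α => funext fun U => ?_⟩
  have hprod : (∏ k ∈ U, X k) * ∑ β ∈ A, monomial (β - sqfreeExp U) (s β U) =
      ∑ β ∈ A, (monomial β (s β U) : PolyR K n) := by
    rw [prod_X_eq_monomial, Finset.mul_sum]
    refine Finset.sum_congr rfl fun β _ => ?_
    by_cases h0 : s β U = 0
    · simp [h0]
    · rw [monomial_mul, one_mul, add_tsub_cancel_of_le (hs β U h0)]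
  rw [koszulStrand, hprod, coeff_sum]
  simp only [coeff_monomial, Finset.sum_ite_eq']
  split_ifs with hα
  · rfl
  · rw [hA α hα, Pi.zero_apply]

def IsUpperFace (I : Ideal (PolyR K n)) (α : Fin n →₀ ℕ) (T : Finset (Fin n)) : Prop :=
  ∃ γ, γ + sqfreeExp T = α ∧ monomial γ (1 : K) ∈ I

lemma IsMonomialIdeal.mem_iff {I : Ideal (PolyR K n)} (hI : IsMonomialIdeal K n I)
    {p : PolyR K n} : p ∈ I ↔ ∀ γ ∈ p.support, monomial γ (1 : K) ∈ I := by
  obtain ⟨A, rfl⟩ := hI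
  simp [mem_ideal_span_monomial_image]

lemma isHomogeneous_iff_degree {p : PolyR K n} {d : ℕ} :
    p.IsHomogeneous d ↔ ∀ γ ∈ p.support, γ.degree = d := by
  simp only [IsHomogeneous, IsWeightedHomogeneous, MvPolynomial.mem_support_iff,
    degree_eq_weight_one]
  rfl

lemma mem_kosC_iff {I : Ideal (PolyR K n)} {i j : ℕ} {f : Finset (Fin n) → PolyR K n} :
    f ∈ kosC K n I i j ↔ ∀ S, f S ≠ 0 →
      i ≤ j ∧ S.card = i ∧ f S ∈ I ∧ f S ∈ homogeneousSubmodule (Fin n) K (j - i) := by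
  unfold kosC
  split_ifs with hij
  · simp only [Submodule.mem_iInf, Submodule.mem_comap, LinearMap.proj_apply]
    refine forall_congr' fun S => ?_
    split_ifs with hS <;> by_cases h0 : f S = 0 <;> simp [h0, hS, hij, Submodule.mem_inf]
  · simp [Submodule.mem_bot, funext_iff, hij]

lemma mem_kosC_iff_koszulStrand {I : Ideal (PolyR K n)} (hI : IsMonomialIdeal K n I) {i j : ℕ}
    {f : Finset (Fin n) → PolyR K n} :
    f ∈ kosC K n I i j ↔ ∀ α T, koszulStrand f α T ≠ 0 →
      T.card = i ∧ α.degree = j ∧ IsUpperFace I α T := by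
  constructor
  · intro hf α T hne
    obtain ⟨hle, hcoeff⟩ : sqfreeExp T ≤ α ∧ coeff (α - sqfreeExp T) (f T) ≠ 0 := by
      rw [koszulStrand_apply] at hne
      split_ifs at hne with hle
      exacts [⟨hle, hne⟩, absurd rfl hne]
    have hfT : f T ≠ 0 := fun h => hcoeff (by rw [h, coeff_zero])
    obtain ⟨hij, hcard, hmem, hhom⟩ := mem_kosC_iff.mp hf T hfT
    have hγ : α - sqfreeExp T ∈ (f T).support := MvPolynomial.mem_support_iff.mpr hcoeff
    refine ⟨hcard, ?_, α - sqfreeExp T, tsub_add_cancel_of_le hle, hI.mem_iff.mp hmem _ hγ⟩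
    have hdeg := isHomogeneous_iff_degree.mp hhom _ hγ
    rw [← tsub_add_cancel_of_le hle, map_add, hdeg, degree_sqfreeExp, hcard]
    omega
  · intro h
    refine mem_kosC_iff.mpr fun S hS => ?_
    have key : ∀ γ ∈ (f S).support,
        S.card = i ∧ γ.degree + i = j ∧ monomial γ (1 : K) ∈ I := by
      intro γ hγ
      obtain ⟨hcard, hdeg, γ', hγ', hmem⟩ :=
        h (γ + sqfreeExp S) S (by rwa [koszulStrand_add_sqfreeExp, ← MvPolynomial.mem_support_iff])
      rw [map_add, degree_sqfreeExp, hcard] at hdeg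
      exact ⟨hcard, hdeg, add_right_cancel hγ' ▸ hmem⟩
    obtain ⟨γ₀, hγ₀⟩ : (f S).support.Nonempty :=
      Finset.nonempty_iff_ne_empty.mpr (mt MvPolynomial.support_eq_empty.mp hS)
    obtain ⟨hcard, hdeg₀, -⟩ := key γ₀ hγ₀
    refine ⟨by omega, hcard, hI.mem_iff.mpr fun γ hγ => (key γ hγ).2.2,
      isHomogeneous_iff_degree.mpr fun γ hγ => ?_⟩
    have := (key γ hγ).2.1
    omega

def IsConeApex (I : Ideal (PolyR K n)) (i : ℕ) (α : Fin n →₀ ℕ) (v : Fin n) : Prop :=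
  ∀ T : Finset (Fin n), T.card = i → v ∉ T → IsUpperFace I α T → IsUpperFace I α (insert v T)

lemma coneHomotopy_koszulStrand_support {I : Ideal (PolyR K n)} (hI : IsMonomialIdeal K n I)
    {i j : ℕ} {f : Finset (Fin n) → PolyR K n} (hf : f ∈ kosC K n I i j) {α : Fin n →₀ ℕ}
    {v : Fin n} (hv : IsConeApex I i α v) (U : Finset (Fin n))
    (h : coneHomotopy v (koszulStrand f α) U ≠ 0) :
    U.card = i + 1 ∧ α.degree = j ∧ IsUpperFace I α U := by
  simp only [coneHomotopy] at h
  split_ifs at h with hvU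
  · obtain ⟨hcard, hdeg, hface⟩ :=
      (mem_kosC_iff_koszulStrand hI).mp hf α _ (right_ne_zero_of_smul h)
    refine ⟨by rw [← Finset.card_erase_add_one hvU, hcard], hdeg, ?_⟩
    simpa [Finset.insert_erase hvU] using hv _ hcard (Finset.notMem_erase _ _) hface
  · exact absurd rfl h

theorem mem_map_kDiff_of_isConeApex {I : Ideal (PolyR K n)} (hI : IsMonomialIdeal K n I)
    {i j : ℕ} {f : Finset (Fin n) → PolyR K n} (hf : f ∈ kosC K n I i j)
    (hcyc : kDiff K n f = 0) (hcone : ∀ α : Fin n →₀ ℕ, α.degree = j → ∃ v, IsConeApex I i α v) :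
    f ∈ Submodule.map (kDiff K n) (kosC K n I (i + 1) j) := by
  classical
  choose v hv using hcone
  have hf' := (mem_kosC_iff_koszulStrand hI).mp hf
  have hstrand_zero : ∀ α, ¬ α.degree = j → koszulStrand f α = 0 :=
    fun α hα => funext fun T => by_contra fun h => hα (hf' α T h).2.1
  -- the preimage is built strand by strand, `∂ ∘ s + s ∘ ∂ = id` turning each cycle into a boundary
  set s : (Fin n →₀ ℕ) → Finset (Fin n) → K := fun α =>
    if h : α.degree = j then coneHomotopy (v α h) (koszulStrand f α) else 0 with hs_def
  have hs : ∀ α U, s α U ≠ 0 → U.card = i + 1 ∧ α.degree = j ∧ IsUpperFace I α U := by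
    intro α U hne
    by_cases hα : α.degree = j
    · simp only [hs_def, dif_pos hα] at hne
      exact coneHomotopy_koszulStrand_support hI hf (hv α hα) U hne
    · simp [hs_def, hα] at hne
  set A := Finset.univ.biUnion fun T => ((∏ k ∈ T, X k) * f T).support
  have hA : ∀ α ∉ A, s α = 0 := by
    intro α hα
    have : koszulStrand f α = 0 := funext fun T => by
      by_contra h
      exact hα (Finset.mem_biUnion.mpr ⟨T, Finset.mem_univ _, MvPolynomial.mem_support_iff.mpr h⟩)
    simp [hs_def, this]
  obtain ⟨g, hg⟩ := exists_koszulStrand_eq s A hA fun α U h => by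
    obtain ⟨-, -, γ, hγ, -⟩ := hs α U h
    exact hγ ▸ le_add_self
  refine ⟨g, (mem_kosC_iff_koszulStrand hI).mpr fun α U h => hs α U (hg α ▸ h), ?_⟩
  refine eq_of_koszulStrand_eq fun α => ?_
  rw [koszulStrand_kDiff, hg]
  by_cases hα : α.degree = j
  · have hbd := koszulBoundary_coneHomotopy_add (v α hα) (koszulStrand f α)
    rw [← koszulStrand_kDiff, hcyc] at hbd
    simpa [hs_def, hα] using hbd
  · simp [hs_def, hα, hstrand_zero α hα]

lemma koszulStrand_kDiff_eq_zero {I : Ideal (PolyR K n)} (hI : IsMonomialIdeal K n I) {i j : ℕ}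
    {g : Finset (Fin n) → PolyR K n} (hg : g ∈ kosC K n I i j) {α : Fin n →₀ ℕ}
    {T : Finset (Fin n)} (hT : ∀ k ∉ T, ¬ IsUpperFace I α (insert k T)) :
    koszulStrand (kDiff K n g) α T = 0 := by
  rw [koszulStrand_kDiff]
  refine Finset.sum_eq_zero fun k hk => ?_
  by_contra h
  exact hT k (Finset.mem_compl.mp hk)
    ((mem_kosC_iff_koszulStrand hI).mp hg α _ (right_ne_zero_of_smul h)).2.2

lemma bettiNum_eq_zero_of_isConeApex {I : Ideal (PolyR K n)} (hI : IsMonomialIdeal K n I)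
    {i j : ℕ} (hcone : ∀ α : Fin n →₀ ℕ, α.degree = j → ∃ v, IsConeApex I i α v) :
    bettiNum K n I i j = 0 := by
  have hle : kosC K n I i j ⊓ LinearMap.ker (kDiff K n) ≤
      Submodule.map (kDiff K n) (kosC K n I (i + 1) j) :=
    fun f ⟨hf, hcyc⟩ => mem_map_kDiff_of_isConeApex hI hf hcyc hcone
  rw [bettiNum, inf_eq_right.mpr hle, Nat.sub_self]

instance finiteDimensional_kosC (I : Ideal (PolyR K n)) (i j : ℕ) :
    FiniteDimensional K (kosC K n I i j) := by
  classical
  let H := ⨆ S, (homogeneousSubmodule (Fin n) K (j - i)).map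
    (LinearMap.single K (fun _ : Finset (Fin n) => PolyR K n) S)
  have : FiniteDimensional K H := Module.Finite.iff_fg.mpr
    (Submodule.fg_iSup _ fun _ => (homogeneousSubmodule_fg _ _ _).map _)
  have hle : kosC K n I i j ≤ H := fun f hf => by
    rw [← Finset.univ_sum_single f]
    refine Submodule.sum_mem _ fun S _ => Submodule.mem_iSup_of_mem S ⟨f S, ?_, rfl⟩
    by_cases h0 : f S = 0
    · rw [h0]; exact Submodule.zero_mem _
    · exact (mem_kosC_iff.mp hf S h0).2.2.2
  exact Submodule.finiteDimensional_of_le hle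

lemma bettiNum_ne_zero {I : Ideal (PolyR K n)} {i j : ℕ} {z : Finset (Fin n) → PolyR K n}
    (hz : z ∈ kosC K n I i j) (hcyc : kDiff K n z = 0)
    (hbd : z ∉ Submodule.map (kDiff K n) (kosC K n I (i + 1) j)) :
    bettiNum K n I i j ≠ 0 := by
  rw [bettiNum]
  set Z := kosC K n I i j ⊓ LinearMap.ker (kDiff K n)
  have : FiniteDimensional K Z := Submodule.finiteDimensional_of_le inf_le_left
  have hlt : Submodule.map (kDiff K n) (kosC K n I (i + 1) j) ⊓ Z < Z :=
    lt_of_le_of_ne inf_le_right fun he => by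
      have hzZ : z ∈ Z := ⟨hz, hcyc⟩
      rw [← he] at hzZ
      exact hbd hzZ.1
  have := Submodule.finrank_lt_finrank_of_lt hlt
  omega

lemma CMreg_eq_of_bettiNum {I : Ideal (PolyR K n)} {r : ℕ}
    (hne : ∃ i j, bettiNum K n I i j ≠ 0 ∧ j - i = r)
    (hzero : ∀ i j, r < j - i → bettiNum K n I i j = 0) : CMreg K n I = r := by
  refine IsGreatest.csSup_eq ⟨?_, ?_⟩
  · obtain ⟨i, j, h, hr⟩ := hne
    exact ⟨i, j, h, hr.symm⟩
  · rintro d ⟨i, j, h, rfl⟩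
    by_contra hlt
    exact h (hzero i j (not_le.mp hlt))

lemma add_sqfreeExp_insert_le {s α : Fin n →₀ ℕ} {T : Finset (Fin n)} {v : Fin n}
    (hle : s + sqfreeExp T ≤ α) (hv : s v < α v) (hvT : v ∉ T) :
    s + sqfreeExp (insert v T) ≤ α := by
  intro k
  have hk := hle k
  simp only [Finsupp.add_apply, sqfreeExp_apply, Finset.mem_insert] at hk ⊢
  by_cases hkv : k = v
  · subst hkv
    simpa [hvT] using hv
  · simpa [hkv] using hk

section SpanMonomial

variable {A : Set (Fin n →₀ ℕ)}

lemma monomial_mem_span_iff {β : Fin n →₀ ℕ} :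
    monomial β (1 : K) ∈ Ideal.span ((fun s => monomial s (1 : K)) '' A) ↔ ∃ s ∈ A, s ≤ β := by
  classical
  rw [mem_ideal_span_monomial_image, support_monomial, if_neg one_ne_zero]
  simp

lemma isUpperFace_span_iff {α : Fin n →₀ ℕ} {T : Finset (Fin n)} :
    IsUpperFace (Ideal.span ((fun s => monomial s (1 : K)) '' A)) α T ↔
      ∃ s ∈ A, s + sqfreeExp T ≤ α := by
  constructor
  · rintro ⟨γ, rfl, hγ⟩
    obtain ⟨s, hs, hle⟩ := monomial_mem_span_iff.mp hγ
    exact ⟨s, hs, add_le_add hle le_rfl⟩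
  · rintro ⟨s, hs, hle⟩
    have hT : sqfreeExp T ≤ α := le_add_self.trans hle
    exact ⟨α - sqfreeExp T, tsub_add_cancel_of_le hT,
      monomial_mem_span_iff.mpr ⟨s, hs, (le_tsub_iff_right hT).mpr hle⟩⟩

lemma isUpperFace_span_insert {α : Fin n →₀ ℕ} {T : Finset (Fin n)} {v : Fin n}
    (hv : ∀ s ∈ A, s v < α v) (hvT : v ∉ T)
    (h : IsUpperFace (Ideal.span ((fun s => monomial s (1 : K)) '' A)) α T) :
    IsUpperFace (Ideal.span ((fun s => monomial s (1 : K)) '' A)) α (insert v T) := by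
  obtain ⟨s, hs, hle⟩ := isUpperFace_span_iff.mp h
  exact isUpperFace_span_iff.mpr ⟨s, hs, add_sqfreeExp_insert_le hle (hv s hs) hvT⟩

lemma exists_isUpperFace_span_singleton {α : Fin n →₀ ℕ}
    (hA : ∀ s ∈ A, s.degree < α.degree)
    (h : IsUpperFace (Ideal.span ((fun s => monomial s (1 : K)) '' A)) α ∅) :
    ∃ v, IsUpperFace (Ideal.span ((fun s => monomial s (1 : K)) '' A)) α {v} := by
  obtain ⟨s, hs, hle⟩ := isUpperFace_span_iff.mp h
  obtain ⟨v, hv⟩ : ∃ v, s v < α v := by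
    by_contra! hge
    exact (hA s hs).ne (congrArg _ (le_antisymm (le_self_add.trans hle) hge))
  exact ⟨v, isUpperFace_span_iff.mpr
    ⟨s, hs, add_sqfreeExp_insert_le hle hv (Finset.notMem_empty v)⟩⟩

end SpanMonomial

lemma kDiff_single_singleton (k : Fin n) (p : PolyR K n) :
    kDiff K n (Pi.single {k} p) = Pi.single ∅ (X k * p) := by
  classical
  funext T
  rw [kDiff_apply]
  by_cases hT : T = ∅
  · subst hT
    rw [Finset.sum_eq_single k]
    · simp [koszulSign_eq]
    · intro l _ hlk
      simp [hlk]
    · simp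
  · rw [Pi.single_apply, if_neg hT]
    refine Finset.sum_eq_zero fun l hl => ?_
    rw [Pi.single_apply, if_neg, mul_zero, smul_zero]
    intro h
    obtain ⟨m, hm⟩ := Finset.nonempty_iff_ne_empty.mpr hT
    have hk := (Finset.eq_singleton_iff_unique_mem.mp h).2
    have hl' := hk l (Finset.mem_insert_self l T)
    have hm' := hk m (Finset.mem_insert_of_mem hm)
    exact Finset.mem_compl.mp hl (by rw [hl', ← hm']; exact hm)

section WeightedPath

variable {a b : ℕ}

def pathGens (a b : ℕ) : Set (Fin 3 →₀ ℕ) :=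
  {single 0 1 + single 1 a, single 1 1 + single 2 b}

def pathLcm (a b : ℕ) : Fin 3 →₀ ℕ := single 0 1 + single 1 a + single 2 b

lemma span_pair_eq_span_pathGens (a b : ℕ) :
    Ideal.span ({X 0 * X 1 ^ a, X 1 * X 2 ^ b} : Set (PolyR K 3)) =
      Ideal.span ((fun s => monomial s (1 : K)) '' pathGens a b) := by
  rw [pathGens, Set.image_pair]
  congr 2 <;> rw [X_pow_eq_monomial, X, monomial_mul, one_mul]

lemma exists_forall_pathGens_lt (ha : 1 ≤ a) {α : Fin 3 →₀ ℕ} (hα : a + b + 2 ≤ α.degree) :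
    ∃ v, ∀ s ∈ pathGens a b, s v < α v := by
  rw [degree_eq_sum, Fin.sum_univ_three] at hα
  simp only [pathGens, Set.mem_insert_iff, Set.mem_singleton_iff, forall_eq_or_imp, forall_eq,
    Finsupp.add_apply, single_apply]
  by_cases h0 : 2 ≤ α 0
  · exact ⟨0, by simp; omega⟩
  by_cases h1 : a + 1 ≤ α 1
  · exact ⟨1, by simp; omega⟩
  · exact ⟨2, by simp; omega⟩

lemma bettiNum_pathGens_eq_zero (ha : 1 ≤ a) (hb : 1 ≤ b) {i j : ℕ} (h : a + b < j - i) :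
    bettiNum K 3 (Ideal.span ((fun s => monomial s (1 : K)) '' pathGens a b)) i j = 0 := by
  refine bettiNum_eq_zero_of_isConeApex ⟨_, rfl⟩ fun α hα => ?_
  rcases (show a + b + 2 ≤ j ∨ (i = 0 ∧ j = a + b + 1) by omega) with hj | ⟨rfl, rfl⟩
  · obtain ⟨v, hv⟩ := exists_forall_pathGens_lt ha (hα ▸ hj)
    exact ⟨v, fun T _ hvT hT => isUpperFace_span_insert hv hvT hT⟩
  · have hdeg : ∀ s ∈ pathGens a b, s.degree < α.degree := by
      simp only [pathGens, Set.mem_insert_iff, Set.mem_singleton_iff, forall_eq_or_imp,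
        forall_eq, map_add, degree_single, hα]
      omega
    by_cases hempty : IsUpperFace (Ideal.span ((fun s => monomial s (1 : K)) '' pathGens a b)) α ∅
    · obtain ⟨v, hv⟩ := exists_isUpperFace_span_singleton hdeg hempty
      exact ⟨v, fun T hT _ _ => by rwa [Finset.card_eq_zero.mp hT, Finset.insert_empty]⟩
    · exact ⟨0, fun T hT _ hface => absurd (Finset.card_eq_zero.mp hT ▸ hface) hempty⟩

lemma X_zero_mul_monomial_eq_pathLcm :
    X 0 * monomial (single 1 a + single 2 b) (1 : K) = monomial (pathLcm a b) 1 := by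
  rw [X, monomial_mul, one_mul, pathLcm, ← add_assoc]

lemma X_two_mul_monomial_eq_pathLcm (hb : 1 ≤ b) :
    X 2 * monomial (single 0 1 + single 1 a + single 2 (b - 1)) (1 : K) =
      monomial (pathLcm a b) 1 := by
  have hexp : single 2 1 + (single 0 1 + single 1 a + single 2 (b - 1)) = pathLcm a b := by
    ext k
    fin_cases k <;> simp [pathLcm]
    omega
  rw [X, monomial_mul, one_mul, hexp]

variable (K) in
def pathSyzygy (a b : ℕ) : Finset (Fin 3) → PolyR K 3 :=
  (Pi.single {0} (monomial (single 1 a + single 2 b) 1) : Finset (Fin 3) → PolyR K 3) -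
    (Pi.single {2} (monomial (single 0 1 + single 1 a + single 2 (b - 1)) 1) :
      Finset (Fin 3) → PolyR K 3)

lemma kDiff_pathSyzygy (hb : 1 ≤ b) : kDiff K 3 (pathSyzygy K a b) = 0 := by
  rw [pathSyzygy, map_sub, kDiff_single_singleton, kDiff_single_singleton,
    X_zero_mul_monomial_eq_pathLcm, X_two_mul_monomial_eq_pathLcm hb, sub_self]

lemma pathSyzygy_mem_kosC (ha : 1 ≤ a) (hb : 1 ≤ b) :
    pathSyzygy K a b ∈
      kosC K 3 (Ideal.span ((fun s => monomial s (1 : K)) '' pathGens a b)) 1 (a + b + 1) := by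
  refine mem_kosC_iff.mpr fun S hS => ⟨by omega, ?_⟩
  by_cases h0 : S = {0}
  · subst h0
    rw [pathSyzygy, Pi.sub_apply, Pi.single_eq_same, Pi.single_eq_of_ne (by decide), sub_zero]
    refine ⟨rfl, monomial_mem_span_iff.mpr ⟨_, Or.inr rfl, ?_⟩, isHomogeneous_monomial _ (by simp)⟩
    intro k
    fin_cases k <;> simp
    omega
  by_cases h2 : S = {2}
  · subst h2
    rw [pathSyzygy, Pi.sub_apply, Pi.single_eq_same, Pi.single_eq_of_ne (by decide), zero_sub]
    refine ⟨rfl, neg_mem (monomial_mem_span_iff.mpr ⟨_, Or.inl rfl, ?_⟩),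
      neg_mem (isHomogeneous_monomial _ ?_)⟩
    · intro k
      fin_cases k <;> simp
    · simp only [map_add, degree_single]
      omega
  · simp [pathSyzygy, h0, h2] at hS

lemma koszulStrand_pathSyzygy (hb : 1 ≤ b) :
    koszulStrand (pathSyzygy K a b) (pathLcm a b) {2} = -1 := by
  rw [koszulStrand, Finset.prod_singleton, pathSyzygy, Pi.sub_apply, Pi.single_eq_same,
    Pi.single_eq_of_ne (by decide), zero_sub, mul_neg, X_two_mul_monomial_eq_pathLcm hb,
    coeff_neg, coeff_monomial, if_pos rfl]

lemma not_isUpperFace_pathLcm_insert_two {k : Fin 3} (hk : k ∉ ({2} : Finset (Fin 3))) :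
    ¬ IsUpperFace (Ideal.span ((fun s => monomial s (1 : K)) '' pathGens a b)) (pathLcm a b)
      (insert k {2}) := by
  rw [isUpperFace_span_iff]
  rintro ⟨s, hs, hle⟩
  have h0 := hle 0
  have h1 := hle 1
  have h2 := hle 2
  simp only [pathGens, Set.mem_insert_iff, Set.mem_singleton_iff] at hs
  fin_cases k <;> rcases hs with rfl | rfl <;> simp [sqfreeExp_apply, pathLcm] at h0 h1 h2 hk

lemma bettiNum_pathGens_ne_zero (ha : 1 ≤ a) (hb : 1 ≤ b) :
    bettiNum K 3 (Ideal.span ((fun s => monomial s (1 : K)) '' pathGens a b)) 1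
      (a + b + 1) ≠ 0 := by
  refine bettiNum_ne_zero (pathSyzygy_mem_kosC ha hb) (kDiff_pathSyzygy hb) ?_
  rintro ⟨g, hg, hgz⟩
  have hstrand := koszulStrand_kDiff_eq_zero ⟨_, rfl⟩ hg
    fun _ hk => not_isUpperFace_pathLcm_insert_two hk
  rw [hgz, koszulStrand_pathSyzygy hb] at hstrand
  exact neg_ne_zero.mpr one_ne_zero hstrand

lemma CMreg_pathGens (ha : 1 ≤ a) (hb : 1 ≤ b) :
    CMreg K 3 (Ideal.span ((fun s => monomial s (1 : K)) '' pathGens a b)) = a + b :=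
  CMreg_eq_of_bettiNum ⟨1, a + b + 1, bettiNum_pathGens_ne_zero ha hb, by omega⟩
    fun _ _ h => bettiNum_pathGens_eq_zero ha hb h

end WeightedPath

end

/-- For the weighted oriented path `D₁` with edges `(x₁,x₂), (x₂,x₃)`,
`w(x₁) = 1`, `w(x₂) > 1`, `w(x₃) > 1`, one has
`reg I(D₁) = w(x₁) + w(x₂) + w(x₃) - 1 > d₁ + 1` where `d₁ = max w(xᵢ)`. -/
theorem stmt2 {K : Type} [Field K] (w : Fin 3 → ℕ)
    (h1 : w 0 = 1) (h2 : 1 < w 1) (h3 : 1 < w 2) :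
    CMreg K 3 (Ideal.span ({X 0 * X 1 ^ w 1, X 1 * X 2 ^ w 2} : Set (PolyR K 3))) =
        w 0 + w 1 + w 2 - 1 ∧
      w 0 + w 1 + w 2 - 1 > max (w 0) (max (w 1) (w 2)) + 1 := by
  rw [span_pair_eq_span_pathGens, CMreg_pathGens h2.le h3.le, h1]
  constructor <;> omega
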